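/- Let X be a nonempty compact Hausdorff topological space and let ζ : C(X, ℝ) → ℝ be a state, i.e., a linear functional with ζ(f) ≥ 0 whenever f ≥ 0 pointwise and ζ(1) = 1. Then ζ is an extreme point of the convex set of all states on C(X, ℝ) if and only if ζ is multiplicative, i.e., ζ(f · g) = ζ(f) · ζ(g) for all f, g ∈ C(X, ℝ). -/

import Mathlib

/-! Positivity gives the Cauchy–Schwarz inequality `ψ(fg)² ≤ ψ(f²) ψ(g²)` for a positive functional
`ψ`, so `ψ` kills every `f * k` with `ψ(k²) = 0`. If `ζ` is multiplicative, `k = f - ζ(f)` has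
`ζ(k²) = ζ(k)² = 0`; when `ζ` is a convex combination of states `ζ₁, ζ₂`, positivity forces
`ζ₁(k²) = 0` as well, hence `ζ₁ f = ζ f`. Conversely, for `0 ≤ h ≤ 1` the positive functionals
`ζ(· h)` and `ζ(· (1 - h))` add up to `ζ`; after normalisation they put `ζ` on an open segment
of states unless one of them vanishes, so extremality gives `ζ(f h) = ζ(f) ζ(h)`. On a compact
space such `h` span `C(X, ℝ)`. -/

open ContinuousMap

def ContinuousMap.states (X : Type*) [TopologicalSpace X] : Set (C(X, ℝ) →ₗ[ℝ] ℝ) :=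
  {ζ | (∀ f : C(X, ℝ), 0 ≤ f → 0 ≤ ζ f) ∧ ζ 1 = 1}

lemma ContinuousMap.span_Icc_zero_one_eq_top (X : Type*) [TopologicalSpace X] [CompactSpace X] :
    Submodule.span ℝ (Set.Icc (0 : C(X, ℝ)) 1) = ⊤ := by
  refine Submodule.eq_top_iff'.mpr fun g ↦ ?_
  set c := ‖g‖ + 1
  have hc : 0 < c := by positivity
  have hg : ∀ x, |g x| ≤ ‖g‖ := g.norm_coe_le_norm
  have hmem : (2 * c)⁻¹ • (g + c • 1) ∈ Set.Icc (0 : C(X, ℝ)) 1 := by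
    constructor <;> refine le_def.mpr fun x ↦ ?_ <;>
      simp only [coe_smul, coe_add, coe_one, coe_zero, Pi.smul_apply, Pi.add_apply,
        Pi.one_apply, Pi.zero_apply, smul_eq_mul, mul_one]
    · have := neg_le_of_abs_le (hg x)
      exact mul_nonneg (by positivity) (by linarith)
    · rw [inv_mul_le_iff₀ (by positivity)]
      linarith [le_of_abs_le (hg x)]
  have hdecomp : g = (2 * c) • ((2 * c)⁻¹ • (g + c • 1)) - c • 1 := by
    rw [smul_inv_smul₀ (by positivity), add_sub_cancel_right]
  rw [hdecomp]
  exact Submodule.sub_mem _ (Submodule.smul_mem _ _ (Submodule.subset_span hmem))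
    (Submodule.smul_mem _ _ (Submodule.subset_span ⟨zero_le_one, le_rfl⟩))

section PositiveFunctional

variable {X : Type*} [TopologicalSpace X] {ψ : C(X, ℝ) →ₗ[ℝ] ℝ}

lemma map_mul_sq_le (hψ : ∀ f : C(X, ℝ), 0 ≤ f → 0 ≤ ψ f) (f g : C(X, ℝ)) :
    ψ (f * g) ^ 2 ≤ ψ (f * f) * ψ (g * g) := by
  have hquad : ∀ t : ℝ, 0 ≤ ψ (f * f) * (t * t) + 2 * ψ (f * g) * t + ψ (g * g) := by
    intro t
    have h := hψ _ (by simpa using star_mul_self_nonneg (t • f + g))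
    have hexpand : (t • f + g) * (t • f + g) = (t * t) • (f * f) + (2 * t) • (f * g) + g * g := by
      ext x
      simp only [coe_mul, coe_add, coe_smul, Pi.mul_apply, Pi.add_apply, Pi.smul_apply,
        smul_eq_mul]
      ring
    rw [hexpand, map_add, map_add, map_smul, map_smul, smul_eq_mul, smul_eq_mul] at h
    linarith
  have := discrim_le_zero hquad
  rw [discrim] at this
  linarith

lemma map_mul_eq_zero_of_map_mul_self_eq_zero (hψ : ∀ f : C(X, ℝ), 0 ≤ f → 0 ≤ ψ f)
    {k : C(X, ℝ)} (hk : ψ (k * k) = 0) (f : C(X, ℝ)) : ψ (f * k) = 0 := by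
  have := map_mul_sq_le hψ f k
  rw [hk, mul_zero] at this
  exact pow_eq_zero_iff two_ne_zero |>.mp (le_antisymm this (sq_nonneg _))

lemma eq_zero_of_map_one_eq_zero (hψ : ∀ f : C(X, ℝ), 0 ≤ f → 0 ≤ ψ f) (h1 : ψ 1 = 0) :
    ψ = 0 := by
  ext f
  simpa using map_mul_eq_zero_of_map_mul_self_eq_zero hψ (k := 1) (by simpa using h1) f

end PositiveFunctional

section States

variable {X : Type*} [TopologicalSpace X] {ζ ψ₁ ψ₂ : C(X, ℝ) →ₗ[ℝ] ℝ}

lemma inv_map_one_smul_mem_states (hψ : ∀ f : C(X, ℝ), 0 ≤ f → 0 ≤ ψ₁ f) (h1 : ψ₁ 1 ≠ 0) :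
    (ψ₁ 1)⁻¹ • ψ₁ ∈ states X :=
  ⟨fun f hf ↦ mul_nonneg (inv_nonneg.mpr (hψ 1 zero_le_one)) (hψ f hf), inv_mul_cancel₀ h1⟩

lemma eq_map_one_smul_of_add_eq (hζ : ζ ∈ (states X).extremePoints ℝ)
    (hψ₁ : ∀ f : C(X, ℝ), 0 ≤ f → 0 ≤ ψ₁ f) (hψ₂ : ∀ f : C(X, ℝ), 0 ≤ f → 0 ≤ ψ₂ f)
    (hsum : ψ₁ + ψ₂ = ζ) : ψ₁ = ψ₁ 1 • ζ := by
  have hsum1 : ψ₁ 1 + ψ₂ 1 = 1 := by rw [← LinearMap.add_apply, hsum, hζ.1.2]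
  by_cases ha : ψ₁ 1 = 0
  · rw [ha, zero_smul, eq_zero_of_map_one_eq_zero hψ₁ ha]
  by_cases hb : ψ₂ 1 = 0
  · rw [hb, add_zero] at hsum1
    rw [hsum1, one_smul, ← hsum, eq_zero_of_map_one_eq_zero hψ₂ hb, add_zero]
  have hseg : ζ ∈ openSegment ℝ ((ψ₁ 1)⁻¹ • ψ₁) ((ψ₂ 1)⁻¹ • ψ₂) := by
    refine ⟨ψ₁ 1, ψ₂ 1, lt_of_le_of_ne (hψ₁ 1 zero_le_one) (Ne.symm ha),
      lt_of_le_of_ne (hψ₂ 1 zero_le_one) (Ne.symm hb), hsum1, ?_⟩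
    rw [smul_inv_smul₀ ha, smul_inv_smul₀ hb, hsum]
  have hleft :=
    hζ.2 (inv_map_one_smul_mem_states hψ₁ ha) (inv_map_one_smul_mem_states hψ₂ hb) hseg
  rw [← hleft, smul_inv_smul₀ ha]

lemma map_mul_of_mem_extremePoints_of_mem_Icc (hζ : ζ ∈ (states X).extremePoints ℝ)
    {h : C(X, ℝ)} (hh : h ∈ Set.Icc 0 1) (f : C(X, ℝ)) : ζ (f * h) = ζ f * ζ h := by
  have hsum : ζ ∘ₗ LinearMap.mulRight ℝ h + ζ ∘ₗ LinearMap.mulRight ℝ (1 - h) = ζ := by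
    ext f
    simp [← map_add, ← mul_add]
  have hface := eq_map_one_smul_of_add_eq hζ (fun f hf ↦ hζ.1.1 (f * h) (mul_nonneg hf hh.1))
    (fun f hf ↦ hζ.1.1 (f * (1 - h)) (mul_nonneg hf (sub_nonneg.mpr hh.2))) hsum
  simpa [mul_comm] using LinearMap.congr_fun hface f

lemma map_mul_of_mem_extremePoints [CompactSpace X] (hζ : ζ ∈ (states X).extremePoints ℝ)
    (f g : C(X, ℝ)) : ζ (f * g) = ζ f * ζ g := by
  have : ζ ∘ₗ LinearMap.mulLeft ℝ f = ζ f • ζ :=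
    LinearMap.ext_on (span_Icc_zero_one_eq_top X)
      fun h hh ↦ map_mul_of_mem_extremePoints_of_mem_Icc hζ hh f
  exact LinearMap.congr_fun this g

lemma mem_extremePoints_of_map_mul (hζ : ζ ∈ states X)
    (hmul : ∀ f g : C(X, ℝ), ζ (f * g) = ζ f * ζ g) : ζ ∈ (states X).extremePoints ℝ := by
  refine ⟨hζ, fun ζ₁ hζ₁ ζ₂ hζ₂ ⟨a, b, ha, hb, _, hsum⟩ ↦ LinearMap.ext fun f ↦ ?_⟩
  set k := f - ζ f • 1
  have hvar : ζ (k * k) = 0 := by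
    rw [hmul, map_sub, map_smul, hζ.2, smul_eq_mul, mul_one, sub_self, mul_zero]
  have hvar₁ : ζ₁ (k * k) = 0 := by
    have h := LinearMap.congr_fun hsum (k * k)
    simp only [LinearMap.add_apply, LinearMap.smul_apply, smul_eq_mul, hvar] at h
    have hk : 0 ≤ k * k := by simpa using star_mul_self_nonneg k
    have h₁ := hζ₁.1 _ hk
    have h₂ := hζ₂.1 _ hk
    nlinarith
  have := map_mul_eq_zero_of_map_mul_self_eq_zero hζ₁.1 hvar₁ 1
  rwa [one_mul, map_sub, map_smul, hζ₁.2, smul_eq_mul, mul_one, sub_eq_zero] at this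

end States

theorem extreme_state_iff_multiplicative_general
    (X : Type*) [TopologicalSpace X] [CompactSpace X]
    (S : Set (C(X, ℝ) →ₗ[ℝ] ℝ))
    (hS : S = {ζ | (∀ f : C(X, ℝ), 0 ≤ f → 0 ≤ ζ f) ∧ ζ 1 = 1})
    (ζ : C(X, ℝ) →ₗ[ℝ] ℝ) (hζ : ζ ∈ S) :
    ζ ∈ Set.extremePoints ℝ S ↔ ∀ f g : C(X, ℝ), ζ (f * g) = ζ f * ζ g := by
  subst hS
  exact ⟨map_mul_of_mem_extremePoints, mem_extremePoints_of_map_mul hζ⟩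

/-- A state on `C(X, ℝ)` (a positive linear functional with `ζ(1) = 1`), for `X` a nonempty
compact Hausdorff space, is an extreme point of the convex set of states iff it is
multiplicative. -/
theorem extreme_state_iff_multiplicative
    (X : Type*) [TopologicalSpace X] [CompactSpace X] [T2Space X] [Nonempty X]
    (S : Set (C(X, ℝ) →ₗ[ℝ] ℝ))
    (hS : S = {ζ | (∀ f : C(X, ℝ), 0 ≤ f → 0 ≤ ζ f) ∧ ζ 1 = 1})
    (ζ : C(X, ℝ) →ₗ[ℝ] ℝ) (hζ : ζ ∈ S) :
    ζ ∈ Set.extremePoints ℝ S ↔ ∀ f g : C(X, ℝ), ζ (f * g) = ζ f * ζ g :=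
  extreme_state_iff_multiplicative_general X S hS ζ hζ
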